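/- arXiv:1606.09480 — 4 statements merged into one kernel-verified Lean document; each statement's English description precedes it below -/
import Mathlib

section
/- Let Ñ be a k×k real matrix such that every row and every column of Ñ has exactly two nonzero entries, arranged cyclically: for each ℓ ∈ {1,…,k}, row ℓ is nonzero exactly in columns ℓ-1 and ℓ (indices mod k). If there exists v ∈ ℝ^k with all entries nonzero and Ñv = 0, then there exists a nonzero vector ω ∈ ℝ^k with ωᵀÑ = 0, and every entry of ω is nonzero. -/
/-! If every row `i` of `N` is supported on `{i - s, i}`, then `N v = 0` says
`N i (i - s) * v (i - s) = - N i i * v i`, so `ω i = (v (i - s) * N i (i - s))⁻¹` makes the two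
terms of each column of `ωᵀ N` equal to `-1 / v j` and `1 / v j`; its entries are nonzero as
soon as those of `v` and the subdiagonal of `N` are. -/

namespace Matrix

variable {ι R : Type*} [Fintype ι] [AddGroup ι] [Field R]
  {N : Matrix ι ι R} {s : ι}

theorem mulVec_apply_of_cyclic_support (hs : s ≠ 0)
    (hsupp : ∀ i j, N i j ≠ 0 → j = i - s ∨ j = i) (v : ι → R) (i : ι) :
    (N *ᵥ v) i = N i (i - s) * v (i - s) + N i i * v i := by
  refine Finset.sum_eq_add_of_mem _ _ (Finset.mem_univ _) (Finset.mem_univ _)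
    (by simpa using hs) fun j _ hj => ?_
  have hNij : N i j = 0 := by
    by_contra hne
    exact (hsupp i j hne).elim hj.1 hj.2
  simp [hNij]

theorem vecMul_apply_of_cyclic_support (hs : s ≠ 0)
    (hsupp : ∀ i j, N i j ≠ 0 → j = i - s ∨ j = i) (ω : ι → R) (j : ι) :
    (ω ᵥ* N) j = ω j * N j j + ω (j + s) * N (j + s) j := by
  refine Finset.sum_eq_add_of_mem _ _ (Finset.mem_univ _) (Finset.mem_univ _)
    (by simpa using hs) fun i _ hi => ?_
  have hNij : N i j = 0 := by
    by_contra hne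
    rcases hsupp i j hne with rfl | rfl
    · exact hi.2 (sub_add_cancel i s).symm
    · exact hi.1 rfl
  simp [hNij]

theorem vecMul_inv_subdiag_mul_eq_zero (hs : s ≠ 0)
    (hsupp : ∀ i j, N i j ≠ 0 → j = i - s ∨ j = i) (hsub : ∀ i, N i (i - s) ≠ 0)
    {v : ι → R} (hvne : ∀ i, v i ≠ 0) (hv : N *ᵥ v = 0) :
    (fun i => (v (i - s) * N i (i - s))⁻¹) ᵥ* N = 0 := by
  funext j
  have hrow : N j (j - s) * v (j - s) + N j j * v j = 0 := by
    rw [← mulVec_apply_of_cyclic_support hs hsupp, hv, Pi.zero_apply]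
  have hN : N (j + s) j ≠ 0 := by simpa using hsub (j + s)
  have hvj := hvne j
  have hvjs := hvne (j - s)
  have hNj := hsub j
  rw [vecMul_apply_of_cyclic_support hs hsupp, add_sub_cancel_right, Pi.zero_apply]
  field_simp
  linear_combination hrow

end Matrix

/-- If the `k × k` matrix `Ñ` has cyclic nonzero pattern (row `ℓ` is nonzero
exactly in columns `ℓ - 1` and `ℓ`, indices mod `k`) and there is `v` with all entries
nonzero and `Ñ v = 0`, then there is a nonzero left-kernel vector `ω` all of whose
entries are nonzero. -/
theorem stmt2 {k : ℕ} [NeZero k] (hk : 2 ≤ k) (N : Matrix (Fin k) (Fin k) ℝ)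
    (hpat : ∀ ℓ c : Fin k, N ℓ c ≠ 0 ↔ (c = ℓ - 1 ∨ c = ℓ))
    (v : Fin k → ℝ) (hvne : ∀ i, v i ≠ 0) (hv : N.mulVec v = 0) :
    ∃ ω : Fin k → ℝ, ω ≠ 0 ∧ Matrix.vecMul ω N = 0 ∧ ∀ i, ω i ≠ 0 := by
  have h1 : (1 : Fin k) ≠ 0 := by
    rw [Ne, Fin.ext_iff, Fin.val_one', Nat.mod_eq_of_lt hk]; simp
  have hsub : ∀ ℓ, N ℓ (ℓ - 1) ≠ 0 := fun ℓ => (hpat ℓ _).mpr (Or.inl rfl)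
  have hω : ∀ ℓ, (v (ℓ - 1) * N ℓ (ℓ - 1))⁻¹ ≠ 0 := fun ℓ =>
    inv_ne_zero (mul_ne_zero (hvne _) (hsub ℓ))
  exact ⟨_, fun h => hω 0 (congrFun h 0),
    Matrix.vecMul_inv_subdiag_mul_eq_zero h1 (fun ℓ c => (hpat ℓ c).mp) hsub hvne hv, hω⟩
end

section
/- Let Ñ be a k×k real matrix such that row ℓ is nonzero exactly in columns ℓ-1 and ℓ (indices mod k), and suppose for every column j of Ñ the two nonzero entries have opposite signs. Then any nonzero ω ∈ ℝ^k with ωᵀÑ = 0 has all entries of the same (nonzero) sign; in particular ω can be chosen with all entries positive. -/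
/-!
Column `j` of `Ñ` meets only rows `j` and `j + 1`, so `ωᵀ Ñ = 0` reads
`ω j * Ñ j j + ω (j + 1) * Ñ (j + 1) j = 0`; as the two entries have opposite signs,
`ω (j + 1)` has the sign of `ω j`. Going once around the cycle, all entries of `ω` share the
sign of `ω 0`, which is nonzero since `ω ≠ 0`.
-/

theorem sign_eq_sign_of_mul_add_mul_eq_zero {R : Type*} [CommRing R] [LinearOrder R]
    [IsStrictOrderedRing R] {x y a b : R} (h : x * a + y * b = 0) (hab : a * b < 0) :
    SignType.sign x = SignType.sign y := by
  have hb : b ≠ 0 := by rintro rfl; simp at hab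
  have key : x * (a * b) = -(y * b ^ 2) := by linear_combination b * h
  have hab' : SignType.sign (a * b) = -1 := sign_eq_neg_one_iff.mpr hab
  have hb2 : SignType.sign (b ^ 2) = 1 := sign_eq_one_iff.mpr (sq_pos_of_ne_zero hb)
  have := congrArg SignType.sign key
  rwa [Left.sign_neg, sign_mul x, sign_mul y, hab', hb2, mul_one, mul_neg_one, neg_inj] at this

theorem Matrix.vecMul_apply_of_col_supported_pair {ι κ R : Type*} [Fintype ι] [DecidableEq ι]
    [NonUnitalNonAssocSemiring R] (ω : ι → R) (N : Matrix ι κ R) {j : κ} {a b : ι} (hab : a ≠ b)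
    (hN : ∀ ℓ, ℓ ≠ a → ℓ ≠ b → N ℓ j = 0) :
    vecMul ω N j = ω a * N a j + ω b * N b j :=
  Fintype.sum_eq_add a b hab fun ℓ ⟨ha, hb⟩ => by simp [hN ℓ ha hb]

theorem Fin.forall_of_zero_of_add_one {k : ℕ} [NeZero k] {P : Fin k → Prop} (h0 : P 0)
    (hsucc : ∀ j, P j → P (j + 1)) (i : Fin k) : P i := by
  obtain ⟨n, rfl⟩ := Nat.exists_eq_succ_of_ne_zero (NeZero.ne k)
  exact Fin.induction h0 (fun j hj => Fin.coeSucc_eq_succ ▸ hsucc _ hj) i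

theorem pos_or_neg_of_sign_eq {ι R : Type*} [Zero R] [LinearOrder R] {ω : ι → R} {i₀ : ι}
    (hsign : ∀ i, SignType.sign (ω i) = SignType.sign (ω i₀)) (hω : ω ≠ 0) :
    (∀ i, 0 < ω i) ∨ (∀ i, ω i < 0) := by
  rcases lt_trichotomy (ω i₀) 0 with hneg | hzero | hpos
  · exact Or.inr fun i => sign_eq_neg_one_iff.mp ((hsign i).trans (sign_eq_neg_one_iff.mpr hneg))
  · exact absurd (funext fun i =>
      sign_eq_zero_iff.mp ((hsign i).trans (sign_eq_zero_iff.mpr hzero))) hω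
  · exact Or.inl fun i => sign_eq_one_iff.mp ((hsign i).trans (sign_eq_one_iff.mpr hpos))

theorem stmt3_general {k : ℕ} [NeZero k] (N : Matrix (Fin k) (Fin k) ℝ)
    (hpat : ∀ ℓ c : Fin k, N ℓ c ≠ 0 ↔ (c = ℓ - 1 ∨ c = ℓ))
    (hcol : ∀ j : Fin k, N j j * N (j + 1) j < 0)
    (ω : Fin k → ℝ) (hω : ω ≠ 0) (hker : Matrix.vecMul ω N = 0) :
    ((∀ i, 0 < ω i) ∨ (∀ i, ω i < 0)) ∧
      ∃ ω' : Fin k → ℝ, Matrix.vecMul ω' N = 0 ∧ ∀ i, 0 < ω' i := by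
  have hsucc_ne (j : Fin k) : j ≠ j + 1 := by
    intro h
    have := hcol j
    rw [← h] at this
    exact (mul_self_nonneg (N j j)).not_gt this
  have hcolumn (j : Fin k) : ω j * N j j + ω (j + 1) * N (j + 1) j = 0 := by
    rw [← Matrix.vecMul_apply_of_col_supported_pair ω N (hsucc_ne j), hker, Pi.zero_apply]
    intro ℓ hℓj hℓj'
    by_contra hN
    rcases (hpat ℓ j).mp hN with h | h
    · exact hℓj' (sub_eq_iff_eq_add.mp h.symm)
    · exact hℓj h.symm
  have hsign : ∀ i, SignType.sign (ω i) = SignType.sign (ω 0) :=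
    Fin.forall_of_zero_of_add_one rfl fun j hj =>
      (sign_eq_sign_of_mul_add_mul_eq_zero (hcolumn j) (hcol j)).symm.trans hj
  have hsame := pos_or_neg_of_sign_eq hsign hω
  refine ⟨hsame, ?_⟩
  rcases hsame with hpos | hneg
  · exact ⟨ω, hker, hpos⟩
  · exact ⟨-ω, by rw [Matrix.neg_vecMul, hker, neg_zero], fun i => neg_pos.mpr (hneg i)⟩

/-- If the `k × k` matrix `Ñ` has cyclic nonzero pattern (row `ℓ` is nonzero
exactly in columns `ℓ - 1` and `ℓ`, indices mod `k`) and in every column the two nonzero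
entries (in rows `j` and `j + 1`) have opposite signs, then every nonzero left-kernel
vector `ω` has all entries of the same nonzero sign; in particular it can be chosen with
all entries positive. -/
theorem stmt3 {k : ℕ} [NeZero k] (hk : 2 ≤ k) (N : Matrix (Fin k) (Fin k) ℝ)
    (hpat : ∀ ℓ c : Fin k, N ℓ c ≠ 0 ↔ (c = ℓ - 1 ∨ c = ℓ))
    (hcol : ∀ j : Fin k, N j j * N (j + 1) j < 0)
    (ω : Fin k → ℝ) (hω : ω ≠ 0) (hker : Matrix.vecMul ω N = 0) :
    ((∀ i, 0 < ω i) ∨ (∀ i, ω i < 0)) ∧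
      ∃ ω' : Fin k → ℝ, Matrix.vecMul ω' N = 0 ∧ ∀ i, 0 < ω' i :=
  stmt3_general N hpat hcol ω hω hker
end

section
/- Let N be the (n+1+p)×(m+1) block matrix N = [[N*_c, −α, α′]; [0, 1, −1]; [0, −γ, γ]] where N*_c is n×(m−1), α, α′ ∈ ℝ^n, γ ∈ ℝ^p, and let N* = [N*_c, α′−α] be n×m. Then ker N = {(v_1,…,v_{m−1}, v_m, v_m) ∈ ℝ^{m+1} : (v_1,…,v_m) ∈ ker N*}. -/
/-!
The row of the intermediate `Y` reads `w_false - w_true`, so every kernel vector of `N`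
has equal last two coordinates, i.e. it is the duplication of a vector `v`. On duplicated
vectors the last two columns of `N` act through their sum, and summing them turns the
species block into `N*` and kills the rows of `Y` and of the catalysts (`1 - 1 = -γ + γ = 0`).
Hence `N (dup v) = (N* v, 0)`.
-/

open Matrix

namespace Matrix

variable {R ρ ι : Type*}

def duplicateLast (v : ι ⊕ Unit → R) : ι ⊕ Bool → R :=
  Sum.elim (fun j => v (Sum.inl j)) (fun _ => v (Sum.inr ()))

theorem eq_duplicateLast_of_eq {w : ι ⊕ Bool → R} (hw : w (Sum.inr false) = w (Sum.inr true)) :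
    w = duplicateLast (Sum.elim (fun j => w (Sum.inl j)) fun _ => w (Sum.inr true)) := by
  ext (j | _ | _) <;> simp [duplicateLast, hw]

def mergeLastCols [Add R] (M : Matrix ρ (ι ⊕ Bool) R) : Matrix ρ (ι ⊕ Unit) R :=
  of fun i => Sum.elim (fun j => M i (Sum.inl j)) (fun _ => M i (Sum.inr false) + M i (Sum.inr true))

theorem mulVec_duplicateLast [NonUnitalNonAssocSemiring R] [Fintype ι]
    (M : Matrix ρ (ι ⊕ Bool) R) (v : ι ⊕ Unit → R) :
    M *ᵥ duplicateLast v = M.mergeLastCols *ᵥ v := by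
  ext i
  simp only [mulVec, dotProduct, Fintype.sum_sum_type, Fintype.sum_bool, Fintype.sum_unique,
    duplicateLast, mergeLastCols, of_apply, Sum.elim_inl, Sum.elim_inr, add_mul, add_comm]

end Matrix

/-- Rows are indexed by `Fin n ⊕ (Unit ⊕ Fin p)` (the non-intermediate species, the
intermediate `Y`, the cancelled catalysts) and the columns of `N` by `Fin q ⊕ Bool` (the
`m - 1 = q` untouched reactions, then `y → Y` and `Y → y'`); the columns of `N*` are indexed
by `Fin q ⊕ Unit`. -/
theorem stmt8 {n p q : ℕ}
    (Nc : Matrix (Fin n) (Fin q) ℝ) (α α' : Fin n → ℝ) (γ : Fin p → ℝ)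
    (N : Matrix (Fin n ⊕ (Unit ⊕ Fin p)) (Fin q ⊕ Bool) ℝ)
    (Nstar : Matrix (Fin n) (Fin q ⊕ Unit) ℝ)
    (hN : ∀ i j, N (Sum.inl i) (Sum.inl j) = Nc i j)
    (hNα : ∀ i, N (Sum.inl i) (Sum.inr false) = -α i)
    (hNα' : ∀ i, N (Sum.inl i) (Sum.inr true) = α' i)
    (hY0 : ∀ j, N (Sum.inr (Sum.inl ())) (Sum.inl j) = 0)
    (hYf : N (Sum.inr (Sum.inl ())) (Sum.inr false) = 1)
    (hYt : N (Sum.inr (Sum.inl ())) (Sum.inr true) = -1)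
    (hE0 : ∀ e j, N (Sum.inr (Sum.inr e)) (Sum.inl j) = 0)
    (hEf : ∀ e, N (Sum.inr (Sum.inr e)) (Sum.inr false) = -γ e)
    (hEt : ∀ e, N (Sum.inr (Sum.inr e)) (Sum.inr true) = γ e)
    (hNs : ∀ i j, Nstar i (Sum.inl j) = Nc i j)
    (hNsl : ∀ i, Nstar i (Sum.inr ()) = α' i - α i) :
    ∀ w : Fin q ⊕ Bool → ℝ,
      N.mulVec w = 0 ↔
        ∃ v : Fin q ⊕ Unit → ℝ, Nstar.mulVec v = 0 ∧
          w = Sum.elim (fun j => v (Sum.inl j)) (fun _ => v (Sum.inr ())) := by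
  have hmerge : N.mergeLastCols = fromRows Nstar 0 := by
    ext (i | _ | e) (j | _) <;>
      simp [mergeLastCols, hN, hNα, hNα', hY0, hYf, hYt, hE0, hEf, hEt, hNs, hNsl, neg_add_eq_sub]
  have hdup (v : Fin q ⊕ Unit → ℝ) : N *ᵥ duplicateLast v = Sum.elim (Nstar *ᵥ v) 0 := by
    rw [mulVec_duplicateLast, hmerge, fromRows_mulVec, zero_mulVec]
  intro w
  constructor
  · intro hw
    have hY := congr_fun hw (Sum.inr (Sum.inl ()))
    simp only [mulVec, dotProduct, Fintype.sum_sum_type, Fintype.sum_bool, hY0, hYf, hYt, zero_mul,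
      Finset.sum_const_zero, zero_add, one_mul, neg_mul, Pi.zero_apply] at hY
    set v : Fin q ⊕ Unit → ℝ := Sum.elim (fun j => w (Sum.inl j)) fun _ => w (Sum.inr true)
    have hwv : w = duplicateLast v := eq_duplicateLast_of_eq (by linarith)
    refine ⟨v, ?_, hwv⟩
    rw [hwv, hdup] at hw
    ext i
    simpa using congr_fun hw (Sum.inl i)
  · rintro ⟨v, hv, rfl⟩
    rw [← duplicateLast, hdup, hv, Sum.elim_zero_zero]
end

section
/- Let D be a finite directed graph whose vertex set is partitioned into S-vertices and R-vertices, such that for every edge (u,v) with v an S-vertex, the reverse edge (v,u) may or may not exist, but every edge between an S-vertex and an R-vertex exists in at least the direction into the S-vertex whenever they are adjacent in the underlying undirected graph. If every edge (R, S) whose reverse (S, R) is absent lies on a directed simple cycle of D, and the underlying undirected graph of D is connected, then for any two R-vertices R, R' there is a directed path in D from R to R'. -/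
/-!
Every edge of the underlying undirected graph can be traversed in its own direction: an
edge between an R-vertex and an S-vertex is present towards the S-vertex, and the
opposite direction is either present or, by the cycle hypothesis, replaced by a directed
path. Lifting an undirected path edge by edge therefore gives a directed path between any
two vertices, R-vertices in particular.
-/

namespace BipartiteDigraph

variable {V : Type*} {E : V → V → Prop} {isR : V → Prop}

theorem reflTransGen_of_adj
    (hbip : ∀ u v, E u v → (isR u ↔ ¬ isR v))
    (hRtoS : ∀ r s, isR r → ¬ isR s → (E r s ∨ E s r) → E r s)
    (hcyc : ∀ r s, isR r → ¬ isR s → E r s → ¬ E s r → Relation.ReflTransGen E s r)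
    {u v : V} (huv : E u v ∨ E v u) : Relation.ReflTransGen E u v := by
  have hsides : isR u ↔ ¬ isR v := by
    rcases huv with h | h
    · exact hbip u v h
    · rw [hbip v u h]; tauto
  by_cases hu : isR u
  · exact .single (hRtoS u v hu (hsides.mp hu) huv)
  · have hv : isR v := by tauto
    by_cases hE : E u v
    · exact .single hE
    · exact hcyc v u hv hu (hRtoS v u hv hu huv.symm) hE

theorem reflTransGen_of_connected
    (hbip : ∀ u v, E u v → (isR u ↔ ¬ isR v))
    (hRtoS : ∀ r s, isR r → ¬ isR s → (E r s ∨ E s r) → E r s)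
    (hcyc : ∀ r s, isR r → ¬ isR s → E r s → ¬ E s r → Relation.ReflTransGen E s r)
    (hconn : ∀ u v : V, Relation.ReflTransGen (fun a b => E a b ∨ E b a) u v) (u v : V) :
    Relation.ReflTransGen E u v :=
  (hconn u v).lift' id fun _ _ => reflTransGen_of_adj hbip hRtoS hcyc

end BipartiteDigraph

theorem stmt14_general {V : Type*} (E : V → V → Prop) (isR : V → Prop)
    (hbip : ∀ u v, E u v → (isR u ↔ ¬ isR v))
    (hRtoS : ∀ r s, isR r → ¬ isR s → (E r s ∨ E s r) → E r s)
    (hcyc : ∀ r s, isR r → ¬ isR s → E r s → ¬ E s r → Relation.ReflTransGen E s r)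
    (hconn : ∀ u v : V, Relation.ReflTransGen (fun a b => E a b ∨ E b a) u v) :
    ∀ r r' : V, isR r → isR r' → Relation.ReflTransGen E r r' :=
  fun r r' _ _ => BipartiteDigraph.reflTransGen_of_connected hbip hRtoS hcyc hconn r r'

/-- Let `E` be a directed graph on a vertex set partitioned into R-vertices
(`isR`) and S-vertices (`¬ isR`), bipartite in the sense that every edge joins the two
classes.  Assume that whenever an R-vertex and an S-vertex are adjacent in the underlying
undirected graph, the edge directed into the S-vertex is present; assume that every
one-way edge `(r, s)` (i.e. with `(s, r)` absent) lies on a directed (simple) cycle,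
which is equivalent to `r` being reachable from `s`; and assume the underlying
undirected graph is connected.  Then any R-vertex is reachable from any other by a
directed path. -/
theorem stmt14 {V : Type*} [Fintype V] (E : V → V → Prop) (isR : V → Prop)
    (hbip : ∀ u v, E u v → (isR u ↔ ¬ isR v))
    (hRtoS : ∀ r s, isR r → ¬ isR s → (E r s ∨ E s r) → E r s)
    (hcyc : ∀ r s, isR r → ¬ isR s → E r s → ¬ E s r → Relation.ReflTransGen E s r)
    (hconn : ∀ u v : V, Relation.ReflTransGen (fun a b => E a b ∨ E b a) u v) :
    ∀ r r' : V, isR r → isR r' → Relation.ReflTransGen E r r' :=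
  stmt14_general E isR hbip hRtoS hcyc hconn
end
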